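/- arXiv:2303.07149 — 2 statements merged into one kernel-verified Lean document; each statement's English description precedes it below -/
import Mathlib

section
/- Let a ≥ 2 and let A = (a, b_1, …, b_k) be positive integers with gcd(A) = 1. Then the Sylvester sum satisfies s(A) = (1/(2a))·∑_{r=1}^{a−1} N_r² − (1/2)·∑_{r=1}^{a−1} N_r + (a²−1)/12. -/
/-!
By Bézout, every residue class modulo `a` contains a number representable by `B`, so `N_r` is
well defined, and `m` is representable by `(a, B)` exactly when `m ≥ N_{m mod a}`. The
non-representable numbers in the class of `r` are thus the progression `r, r + a, …, N_r - a`,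
whose sum is `f N_r - f r` with `f x = x² / (2a) - x / 2`; finally `∑_{r < a} f r = -(a² - 1) / 12`.
-/

def IsRepresentable {n : ℕ} (A : Fin n → ℕ) (m : ℕ) : Prop :=
  ∃ x : Fin n → ℕ, m = ∑ i, A i * x i

/-- `N_r`: the least nonnegative integer congruent to `r` modulo `a` that is
representable by `B`. -/
noncomputable def Nres {k : ℕ} (a : ℕ) (B : Fin k → ℕ) (r : ℕ) : ℕ :=
  sInf {m : ℕ | m % a = r ∧ IsRepresentable B m}

open Finset

theorem Finset.natCast_gcd {ι : Type*} (s : Finset ι) (f : ι → ℕ) :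
    ((s.gcd f : ℕ) : ℤ) = s.gcd fun i => (f i : ℤ) := by
  classical
  induction s using Finset.induction_on with
  | empty => simp
  | insert i s hi ih =>
    rw [gcd_insert, gcd_insert, ← ih, ← Int.coe_gcd, Int.gcd_natCast_natCast]
    rfl

theorem isRepresentable_cons_iff {k : ℕ} (a : ℕ) (B : Fin k → ℕ) (m : ℕ) :
    IsRepresentable (Fin.cons a B) m ↔ ∃ t n, IsRepresentable B n ∧ m = a * t + n := by
  simp only [IsRepresentable, Fin.sum_univ_succ, Fin.cons_zero, Fin.cons_succ]
  constructor
  · rintro ⟨x, rfl⟩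
    exact ⟨x 0, _, ⟨fun i => x i.succ, rfl⟩, rfl⟩
  · rintro ⟨t, _, ⟨y, rfl⟩, rfl⟩
    exact ⟨Fin.cons t y, by simp⟩

theorem exists_isRepresentable_natCast_eq {k : ℕ} {a : ℕ} [NeZero a] {B : Fin k → ℕ}
    (hgcd : univ.gcd (Fin.cons a B) = 1) (z : ZMod a) :
    ∃ m, IsRepresentable B m ∧ (m : ZMod a) = z := by
  obtain ⟨c, hc⟩ := Finset.gcd_eq_sum_mul univ fun i => ((Fin.cons a B : Fin (k + 1) → ℕ) i : ℤ)
  rw [← Finset.natCast_gcd, hgcd] at hc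
  have hB : ∑ i, (B i : ZMod a) * (c i.succ : ZMod a) = 1 := by
    simpa [Fin.sum_univ_succ] using (congrArg (Int.cast : ℤ → ZMod a) hc).symm
  refine ⟨∑ i, B i * (z * c i.succ).val, ⟨_, rfl⟩, ?_⟩
  push_cast
  simp_rw [ZMod.natCast_zmod_val, mul_left_comm _ z, ← mul_sum, hB, mul_one]

theorem exists_isRepresentable_mod_eq {k : ℕ} {a : ℕ} {B : Fin k → ℕ}
    (hgcd : univ.gcd (Fin.cons a B) = 1) {r : ℕ} (hr : r < a) :
    ∃ m, m % a = r ∧ IsRepresentable B m := by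
  have : NeZero a := ⟨by omega⟩
  obtain ⟨m, hm, hmr⟩ := exists_isRepresentable_natCast_eq hgcd (r : ZMod a)
  rw [ZMod.natCast_eq_natCast_iff', Nat.mod_eq_of_lt hr] at hmr
  exact ⟨m, hmr, hm⟩

theorem Nres_spec {k : ℕ} {a : ℕ} {B : Fin k → ℕ} (hgcd : univ.gcd (Fin.cons a B) = 1)
    {r : ℕ} (hr : r < a) : Nres a B r % a = r ∧ IsRepresentable B (Nres a B r) :=
  Nat.sInf_mem (exists_isRepresentable_mod_eq hgcd hr)

theorem Nres_zero {k : ℕ} (a : ℕ) (B : Fin k → ℕ) : Nres a B 0 = 0 :=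
  Nat.eq_zero_of_le_zero <| Nat.sInf_le ⟨Nat.zero_mod a, fun _ => 0, by simp⟩

theorem isRepresentable_cons_iff_Nres_le {k : ℕ} {a : ℕ} (ha : 0 < a) {B : Fin k → ℕ}
    (hgcd : univ.gcd (Fin.cons a B) = 1) (m : ℕ) :
    IsRepresentable (Fin.cons a B) m ↔ Nres a B (m % a) ≤ m := by
  rw [isRepresentable_cons_iff]
  constructor
  · rintro ⟨t, n, hn, rfl⟩
    have hmod : n % a = (a * t + n) % a := by simp
    have hle := Nat.sInf_le (s := {m | m % a = (a * t + n) % a ∧ IsRepresentable B m}) ⟨hmod, hn⟩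
    exact hle.trans (Nat.le_add_left n _)
  · intro hle
    obtain ⟨hmod, hrep⟩ := Nres_spec hgcd (Nat.mod_lt m ha)
    obtain ⟨t, ht⟩ := (Nat.modEq_iff_dvd' hle).mp hmod
    exact ⟨t, _, hrep, by omega⟩

theorem filter_range_mod_eq_image {a N r : ℕ} (ha : 0 < a) (h : N % a = r) :
    (range N).filter (· % a = r) = (range (N / a)).image (a * · + r) := by
  have hN := Nat.div_add_mod N a
  have hr : r < a := h ▸ Nat.mod_lt N ha
  ext m
  simp only [mem_filter, mem_range, mem_image]
  constructor
  · rintro ⟨hm, rfl⟩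
    have hm' := Nat.div_add_mod m a
    refine ⟨m / a, ?_, hm'⟩
    exact Nat.lt_of_mul_lt_mul_left (a := a) (by omega)
  · rintro ⟨j, hj, rfl⟩
    have : a * j < a * (N / a) := Nat.mul_lt_mul_of_pos_left hj ha
    refine ⟨by omega, ?_⟩
    rw [Nat.mul_add_mod, Nat.mod_eq_of_lt hr]

theorem sum_range_natCast (n : ℕ) : ∑ j ∈ range n, (j : ℚ) = n * (n - 1) / 2 := by
  induction n with
  | zero => simp
  | succ n ih => rw [sum_range_succ, ih]; push_cast; ring

theorem sum_range_natCast_sq (n : ℕ) :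
    ∑ j ∈ range n, (j : ℚ) ^ 2 = n * (n - 1) * (2 * n - 1) / 6 := by
  induction n with
  | zero => simp
  | succ n ih => rw [sum_range_succ, ih]; push_cast; ring

theorem sum_filter_range_mod_eq {a N r : ℕ} (ha : 0 < a) (h : N % a = r) :
    ∑ m ∈ (range N).filter (· % a = r), (m : ℚ) =
      ((N : ℚ) ^ 2 - r ^ 2) / (2 * a) - (N - r) / 2 := by
  have hN : (N : ℚ) = a * (N / a : ℕ) + r := by exact_mod_cast (h ▸ Nat.div_add_mod N a).symm
  have hinj : Set.InjOn (a * · + r) (range (N / a)) := fun i _ j _ hij =>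
    Nat.eq_of_mul_eq_mul_left ha (Nat.add_right_cancel hij)
  rw [filter_range_mod_eq_image ha h, sum_image hinj]
  push_cast
  rw [sum_add_distrib, ← mul_sum, sum_range_natCast, sum_const, card_range, nsmul_eq_mul, hN]
  field_simp
  ring

theorem finsum_mem_lt_apply_mod {a : ℕ} (ha : 0 < a) {N : ℕ → ℕ} (hN : ∀ r < a, N r % a = r) :
    ∑ᶠ m ∈ {m : ℕ | m < N (m % a)}, (m : ℚ) =
      1 / (2 * a) * ∑ r ∈ range a, (N r : ℚ) ^ 2 - 1 / 2 * ∑ r ∈ range a, (N r : ℚ)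
        + (a ^ 2 - 1) / 12 := by
  have hset : {m : ℕ | m < N (m % a)} =
      ↑((range a).biUnion fun r => (range (N r)).filter (· % a = r)) := by
    ext m
    simp only [Set.mem_ofPred_eq, coe_biUnion, coe_range, Set.mem_Iio, coe_filter,
      mem_range, Set.mem_iUnion, exists_prop]
    constructor
    · exact fun hm => ⟨m % a, Nat.mod_lt m ha, hm, rfl⟩
    · rintro ⟨r, -, hm, rfl⟩
      exact hm
  have hdisj : (↑(range a) : Set ℕ).PairwiseDisjoint fun r => (range (N r)).filter (· % a = r) :=
    fun r _ s _ hrs => disjoint_left.mpr fun m hr hs => hrs ((mem_filter.mp hr).2 ▸ (mem_filter.mp hs).2)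
  rw [hset, finsum_mem_coe_finset, sum_biUnion hdisj,
    sum_congr rfl fun r hr => sum_filter_range_mod_eq ha (hN r (mem_range.mp hr))]
  simp only [sub_div, sum_sub_distrib, ← sum_div, sum_range_natCast, sum_range_natCast_sq]
  have : (a : ℚ) ≠ 0 := by positivity
  field_simp
  ring

theorem stmt_2_general {k : ℕ} (a : ℕ) (ha : 2 ≤ a) (B : Fin k → ℕ)
    (hgcd : Finset.univ.gcd (Fin.cons a B) = 1) :
    (∑ᶠ m ∈ {m : ℕ | ¬ IsRepresentable (Fin.cons a B) m}, (m : ℚ)) =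
      (1 / (2 * a)) * ∑ r ∈ Finset.Ico 1 a, (Nres a B r : ℚ) ^ 2
        - (1 / 2) * ∑ r ∈ Finset.Ico 1 a, (Nres a B r : ℚ)
        + (a ^ 2 - 1) / 12 := by
  have ha0 : 0 < a := by omega
  have hset : {m : ℕ | ¬ IsRepresentable (Fin.cons a B) m} = {m | m < Nres a B (m % a)} := by
    ext m
    simp [isRepresentable_cons_iff_Nres_le ha0 hgcd]
  rw [hset, finsum_mem_lt_apply_mod ha0 fun r hr => (Nres_spec hgcd hr).1, range_eq_Ico,
    sum_eq_sum_Ico_succ_bot ha0, sum_eq_sum_Ico_succ_bot ha0, Nres_zero]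
  simp

/-- For `A = (a, b₁, …, b_k)` with `gcd(A) = 1` and `a ≥ 2`, the Sylvester sum
satisfies `s(A) = (1/(2a))·∑_{r=1}^{a-1} N_r² - (1/2)·∑_{r=1}^{a-1} N_r + (a²-1)/12`. -/
theorem stmt_2 {k : ℕ} (a : ℕ) (ha : 2 ≤ a) (B : Fin k → ℕ)
    (hBpos : ∀ i, 0 < B i)
    (hgcd : Finset.univ.gcd (Fin.cons a B) = 1) :
    (∑ᶠ m ∈ {m : ℕ | ¬ IsRepresentable (Fin.cons a B) m}, (m : ℚ)) =
      (1 / (2 * a)) * ∑ r ∈ Finset.Ico 1 a, (Nres a B r : ℚ) ^ 2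
        - (1 / 2) * ∑ r ∈ Finset.Ico 1 a, (Nres a B r : ℚ)
        + (a ^ 2 - 1) / 12 :=
  stmt_2_general a ha B hgcd
end

section
/- Let a ≥ 2 and let h, d be positive integers with gcd(a, d) = 1 and ha − d > 1, let A = (a, ha−d, ha+d), and set s = ⌊(ha−d)/(2h)⌋. Then the Sylvester number satisfies n(A) = ((ha+d)/(2a))·s(s+1) + ((ha−d)/(2a))·(a−s)(a−s−1) − (a−1)/2. -/
/-!
Let `S` be the semigroup generated by `A = (a, ha - d, ha + d)`. For each residue class modulo
`a` take the least element of `S` in it; these `a` numbers `w₀, …, w_{a-1}` determine the gaps,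
which are exactly the numbers below the `w` of their class, and Selmer's formula
`a · n(A) + a(a-1)/2 = ∑ wᵢ` follows. Since `ha ± d ≡ ±d (mod a)` and `gcd(a, d) = 1`, the least
element of `S` in the class of `k d` (`0 ≤ k < a`) is `min ((ha + d) k, (ha - d)(a - k))`, and
the first term is the smaller one exactly when `k ≤ s`. Summing two arithmetic progressions gives
the formula.
-/

open Finset

section AperyFamily

/-- `w 0, …, w (a - 1)` are the least elements of `S` in the `a` residue classes modulo `a`
(the Apéry set of `S` with respect to `a`), in some order. -/
structure IsAperyFamily (S : Set ℕ) (a : ℕ) (w : ℕ → ℕ) : Prop where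
  mem : ∀ k < a, w k ∈ S
  exists_le : ∀ m ∈ S, ∃ k < a, w k ≤ m ∧ w k ≡ m [MOD a]
  eq_of_modEq : ∀ k < a, ∀ l < a, w k ≡ w l [MOD a] → k = l

variable {S : Set ℕ} {a : ℕ} {w : ℕ → ℕ}

lemma add_mul_mem_of_add_mem (hS : ∀ m ∈ S, m + a ∈ S) {m : ℕ} (hm : m ∈ S) (j : ℕ) :
    m + a * j ∈ S := by
  induction j with
  | zero => simpa using hm
  | succ j ih => simpa [mul_add, ← add_assoc] using hS _ ih

lemma IsAperyFamily.injOn_mod (hw : IsAperyFamily S a w) :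
    Set.InjOn (fun k => w k % a) (range a) :=
  fun k hk l hl hkl => hw.eq_of_modEq k (mem_range.1 hk) l (mem_range.1 hl) hkl

lemma IsAperyFamily.image_mod_eq_range (ha : 0 < a) (hw : IsAperyFamily S a w) :
    (range a).image (fun k => w k % a) = range a := by
  refine eq_of_subset_of_card_le (fun r hr => ?_) ?_
  · obtain ⟨k, -, rfl⟩ := mem_image.1 hr
    exact mem_range.2 (Nat.mod_lt _ ha)
  · rw [card_image_of_injOn hw.injOn_mod]

lemma IsAperyFamily.compl_eq_biUnion (ha : 0 < a) (hS : ∀ m ∈ S, m + a ∈ S)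
    (hw : IsAperyFamily S a w) :
    Sᶜ = ↑((range a).biUnion fun k => (range (w k / a)).image fun j => w k % a + a * j) := by
  ext m
  simp only [Set.mem_compl_iff, coe_biUnion, coe_range, Set.mem_Iio, coe_image,
    Set.mem_iUnion, Set.mem_image, exists_prop]
  constructor
  · intro hm
    obtain ⟨k, hk, hkm⟩ := mem_image.1 ((hw.image_mod_eq_range ha).symm ▸
      mem_range.2 (Nat.mod_lt m ha) : m % a ∈ (range a).image fun k => w k % a)
    refine ⟨k, mem_range.1 hk, m / a, ?_, by rw [hkm, Nat.mod_add_div]⟩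
    by_contra! hle
    refine hm ?_
    have hwm : w k ≤ m := by
      rw [← Nat.mod_add_div (w k) a, ← Nat.mod_add_div m a, hkm]
      exact Nat.add_le_add_left (Nat.mul_le_mul_left a hle) _
    obtain ⟨j, hj⟩ : a ∣ m - w k := (Nat.modEq_iff_dvd' hwm).1 hkm
    rw [show m = w k + a * j by omega]
    exact add_mul_mem_of_add_mem hS (hw.mem k (mem_range.1 hk)) j
  · rintro ⟨k, hk, j, hj, rfl⟩ hm
    obtain ⟨l, hl, hle, hlm⟩ := hw.exists_le _ hm
    obtain rfl : l = k := hw.eq_of_modEq l hl k hk <| hlm.trans (by simp [Nat.ModEq])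
    have := Nat.mod_add_div (w l) a
    have : a * j < a * (w l / a) := Nat.mul_lt_mul_of_pos_left hj ha
    omega

lemma IsAperyFamily.ncard_compl (ha : 0 < a) (hS : ∀ m ∈ S, m + a ∈ S)
    (hw : IsAperyFamily S a w) : Sᶜ.ncard = ∑ k ∈ range a, w k / a := by
  rw [hw.compl_eq_biUnion ha hS, Set.ncard_coe_finset, card_biUnion]
  · refine sum_congr rfl fun k _ => ?_
    rw [card_image_of_injective _ fun i j hij => Nat.eq_of_mul_eq_mul_left ha (by omega),
      card_range]
  · intro k hk l hl hkl
    refine disjoint_left.2 fun m hmk hml => hkl ?_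
    obtain ⟨i, -, rfl⟩ := mem_image.1 hmk
    obtain ⟨j, -, hj⟩ := mem_image.1 hml
    refine hw.eq_of_modEq k (mem_range.1 hk) l (mem_range.1 hl) ?_
    simpa [Nat.ModEq, Nat.add_mul_mod_self_left] using (congrArg (· % a) hj).symm

theorem IsAperyFamily.selmer_formula (ha : 0 < a) (hS : ∀ m ∈ S, m + a ∈ S)
    (hw : IsAperyFamily S a w) :
    a * Sᶜ.ncard + ∑ r ∈ range a, r = ∑ k ∈ range a, w k := by
  have hres : ∑ r ∈ range a, r = ∑ k ∈ range a, w k % a := by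
    conv_lhs => rw [← hw.image_mod_eq_range ha]
    exact sum_image hw.injOn_mod
  rw [hw.ncard_compl ha hS, mul_sum, hres, ← sum_add_distrib]
  exact sum_congr rfl fun k _ => Nat.div_add_mod (w k) a

end AperyFamily

lemma isRepresentable_three_iff {a b c m : ℕ} :
    IsRepresentable ![a, b, c] m ↔ ∃ x y z : ℕ, m = a * x + b * y + c * z := by
  constructor
  · rintro ⟨x, hx⟩
    exact ⟨x 0, x 1, x 2, by simpa [Fin.sum_univ_three] using hx⟩
  · rintro ⟨x, y, z, h⟩
    exact ⟨![x, y, z], by simpa [Fin.sum_univ_three] using h⟩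

lemma IsRepresentable.add_first {a b c m : ℕ} (hm : IsRepresentable ![a, b, c] m) :
    IsRepresentable ![a, b, c] (m + a) := by
  obtain ⟨x, y, z, rfl⟩ := isRepresentable_three_iff.1 hm
  exact isRepresentable_three_iff.2 ⟨x + 1, y, z, by ring⟩

/-- The least element of the semigroup `⟨a, ha - d, ha + d⟩` congruent to `k d` modulo `a`. -/
def apery (a h d k : ℕ) : ℕ := min ((h * a + d) * k) ((h * a - d) * (a - k))

section Apery

variable {a h d : ℕ}

lemma isRepresentable_apery (k : ℕ) :
    IsRepresentable ![a, h * a - d, h * a + d] (apery a h d k) := by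
  rw [isRepresentable_three_iff]
  rcases min_choice ((h * a + d) * k) ((h * a - d) * (a - k)) with hk | hk <;>
    rw [apery, hk]
  · exact ⟨0, 0, k, by ring⟩
  · exact ⟨0, a - k, 0, by ring⟩

lemma natCast_apery (hda : d ≤ h * a) {k : ℕ} (hk : k ≤ a) :
    (apery a h d k : ZMod a) = k * d := by
  have ha : (a : ZMod a) = 0 := ZMod.natCast_self a
  rcases min_choice ((h * a + d) * k) ((h * a - d) * (a - k)) with hmin | hmin <;>
    rw [apery, hmin]
  · push_cast
    linear_combination (h * k : ZMod a) * ha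
  · push_cast [Nat.cast_sub hda, Nat.cast_sub hk]
    linear_combination (h * a - h * k - d : ZMod a) * ha

lemma eq_of_apery_modEq_apery (had : Nat.gcd a d = 1) (hda : d ≤ h * a) {k l : ℕ} (hk : k < a)
    (hl : l < a) (hkl : apery a h d k ≡ apery a h d l [MOD a]) : k = l := by
  rw [← ZMod.natCast_eq_natCast_iff, natCast_apery hda hk.le, natCast_apery hda hl.le,
    ← Nat.cast_mul, ← Nat.cast_mul, ZMod.natCast_eq_natCast_iff] at hkl
  have := Nat.ModEq.cancel_right_of_coprime had hkl
  rwa [Nat.ModEq, Nat.mod_eq_of_lt hk, Nat.mod_eq_of_lt hl] at this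

/-- For `m = a x + (ha - d) y + (ha + d) z`, the residue `k` of `z - y` modulo `a` satisfies
`k ≤ z` or `a - k ≤ y`, according to the sign of `(z - y - k) / a`. -/
lemma exists_apery_le (ha : 0 < a) (hda : d ≤ h * a) {m : ℕ}
    (hm : IsRepresentable ![a, h * a - d, h * a + d] m) :
    ∃ k < a, apery a h d k ≤ m ∧ apery a h d k ≡ m [MOD a] := by
  have : NeZero a := ⟨ha.ne'⟩
  obtain ⟨x, y, z, rfl⟩ := isRepresentable_three_iff.1 hm
  set k := ((z : ZMod a) - y).val
  have hka : k < a := ZMod.val_lt _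
  have hk : (k : ZMod a) = z - y := ZMod.natCast_zmod_val _
  refine ⟨k, hka, ?_, ?_⟩
  · obtain ⟨t, ht⟩ : (a : ℤ) ∣ z - y - k := by
      rw [← ZMod.intCast_zmod_eq_zero_iff_dvd]
      push_cast
      rw [hk]
      ring
    rcases le_or_gt 0 t with ht0 | ht0
    · have hkz : k ≤ z := by zify; nlinarith
      calc apery a h d k ≤ (h * a + d) * k := min_le_left _ _
        _ ≤ (h * a + d) * z := Nat.mul_le_mul_left _ hkz
        _ ≤ _ := Nat.le_add_left _ _
    · have hky : a - k ≤ y := by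
        have : (a : ℤ) - k ≤ y := by nlinarith
        omega
      calc apery a h d k ≤ (h * a - d) * (a - k) := min_le_right _ _
        _ ≤ (h * a - d) * y := Nat.mul_le_mul_left _ hky
        _ ≤ _ := by omega
  · rw [← ZMod.natCast_eq_natCast_iff, natCast_apery hda hka.le, hk]
    push_cast [Nat.cast_sub hda]
    linear_combination (-x - h * y - h * z : ZMod a) * ZMod.natCast_self a

lemma isAperyFamily_apery (ha : 0 < a) (had : Nat.gcd a d = 1) (hda : d ≤ h * a) :
    IsAperyFamily {m | IsRepresentable ![a, h * a - d, h * a + d] m} a (apery a h d) where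
  mem k _ := isRepresentable_apery k
  exists_le _ hm := exists_apery_le ha hda hm
  eq_of_modEq _ hk _ hl := eq_of_apery_modEq_apery had hda hk hl

lemma add_mul_le_sub_mul_sub_iff (ha : 0 < a) (hh : 0 < h) (hda : d ≤ h * a) {k : ℕ}
    (hk : k ≤ a) :
    (h * a + d) * k ≤ (h * a - d) * (a - k) ↔ k ≤ (h * a - d) / (2 * h) := by
  rw [Nat.le_div_iff_mul_le (by omega)]
  obtain ⟨b, hb⟩ : ∃ b, h * a = b + d := ⟨h * a - d, by omega⟩
  obtain ⟨j, rfl⟩ : ∃ j, a = k + j := ⟨a - k, by omega⟩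
  have key : k * (2 * h) * (k + j) = 2 * k * (b + d) := by rw [← hb]; ring
  have hscale : k * (2 * h) ≤ b ↔ 2 * k * (b + d) ≤ b * (k + j) := by
    rw [← key]; exact (Nat.mul_le_mul_right_iff ha).symm
  rw [hb, Nat.add_sub_cancel, Nat.add_sub_cancel_left, hscale]
  constructor <;> intro <;> linarith

lemma div_two_mul_lt (ha : 0 < a) (hh : 0 < h) : (h * a - d) / (2 * h) < a := by
  rw [Nat.div_lt_iff_lt_mul (by omega), show a * (2 * h) = h * a + h * a by ring]
  have : 0 < h * a := Nat.mul_pos hh ha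
  omega

lemma sum_apery (ha : 0 < a) (hh : 0 < h) (hda : d ≤ h * a) :
    ∑ k ∈ range a, apery a h d k =
      (h * a + d) * ∑ k ∈ range ((h * a - d) / (2 * h) + 1), k +
        (h * a - d) * ∑ k ∈ range (a - (h * a - d) / (2 * h)), k := by
  set s := (h * a - d) / (2 * h)
  have hsa : s < a := div_two_mul_lt ha hh
  rw [← sum_range_add_sum_Ico _ (show s + 1 ≤ a by omega), mul_sum, mul_sum]
  congr 1
  · refine sum_congr rfl fun k hk => min_eq_left ?_
    have hks : k < s + 1 := mem_range.1 hk
    exact (add_mul_le_sub_mul_sub_iff ha hh hda (by omega)).2 (by omega)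
  · have hright : ∀ k ∈ Ico (s + 1) a, apery a h d k = (h * a - d) * (a - k) := by
      intro k hk
      rw [mem_Ico] at hk
      refine min_eq_right (le_of_not_ge fun hle => ?_)
      have := (add_mul_le_sub_mul_sub_iff ha hh hda hk.2.le).1 hle
      omega
    rw [sum_congr rfl hright, ← mul_sum, ← mul_sum,
      sum_Ico_reflect (fun j => j) (s + 1) (Nat.le_succ a),
      sum_range_eq_add_Ico _ (show 0 < a - s by omega)]
    simp [show a + 1 - (s + 1) = a - s by omega]

end Apery

lemma sum_range_natCast_mul_two {R : Type*} [CommRing R] (n : ℕ) :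
    (∑ i ∈ range n, (i : R)) * 2 = n * (n - 1) := by
  induction n with
  | zero => simp
  | succ n ih => rw [sum_range_succ, add_mul, ih]; push_cast; ring

theorem stmt_16_general (a h d : ℕ) (ha : 2 ≤ a) (hh : 0 < h)
    (had : Nat.gcd a d = 1) (hda : d < h * a)
    (s : ℕ) (hs : s = (h * a - d) / (2 * h)) :
    (({m : ℕ | ¬ IsRepresentable ![a, h * a - d, h * a + d] m}.ncard : ℚ)) =
      (((h : ℚ) * a + d) / (2 * a)) * s * ((s : ℚ) + 1)
        + (((h : ℚ) * a - d) / (2 * a)) * ((a : ℚ) - s) * ((a : ℚ) - s - 1)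
        - ((a : ℚ) - 1) / 2 := by
  have ha0 : 0 < a := by omega
  have hselmer : a * {m | ¬ IsRepresentable ![a, h * a - d, h * a + d] m}.ncard
      + ∑ r ∈ range a, r = ∑ k ∈ range a, apery a h d k :=
    (isAperyFamily_apery ha0 had hda.le).selmer_formula ha0
      fun _ hm => IsRepresentable.add_first hm
  rw [sum_apery ha0 hh hda.le, ← hs] at hselmer
  have hsa : s < a := hs ▸ div_two_mul_lt ha0 hh
  have hQ := congrArg (Nat.cast : ℕ → ℚ) hselmer
  push_cast [Nat.cast_sub hda.le, Nat.cast_sub hsa.le] at hQ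
  have hgauss_a := sum_range_natCast_mul_two (R := ℚ) a
  have hgauss_s := sum_range_natCast_mul_two (R := ℚ) (s + 1)
  have hgauss_as := sum_range_natCast_mul_two (R := ℚ) (a - s)
  push_cast [Nat.cast_sub hsa.le] at hgauss_s hgauss_as
  have ha' : (a : ℚ) ≠ 0 := by positivity
  field_simp
  linear_combination 2 * hQ - hgauss_a + (h * a + d : ℚ) * hgauss_s + (h * a - d : ℚ) * hgauss_as

/-- For `A = (a, ha-d, ha+d)` with `a ≥ 2`, `h, d ≥ 1`, `gcd(a, d) = 1`,
`ha - d > 1`, and `s = ⌊(ha-d)/(2h)⌋`: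
`n(A) = ((ha+d)/(2a))·s(s+1) + ((ha-d)/(2a))·(a-s)(a-s-1) - (a-1)/2`. -/
theorem stmt_16 (a h d : ℕ) (ha : 2 ≤ a) (hh : 0 < h) (hd : 0 < d)
    (had : Nat.gcd a d = 1) (hda : d < h * a) (hhad : 1 < h * a - d)
    (s : ℕ) (hs : s = (h * a - d) / (2 * h)) :
    (({m : ℕ | ¬ IsRepresentable ![a, h * a - d, h * a + d] m}.ncard : ℚ)) =
      (((h : ℚ) * a + d) / (2 * a)) * s * ((s : ℚ) + 1)
        + (((h : ℚ) * a - d) / (2 * a)) * ((a : ℚ) - s) * ((a : ℚ) - s - 1)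
        - ((a : ℚ) - 1) / 2 :=
  stmt_16_general a h d ha hh had hda s hs
end
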